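/- arXiv:2211.17064 — 3 statements merged into one kernel-verified Lean document; each statement's English description precedes it below -/
import Mathlib

section
/- Let k_C(x) = 1/(2x·sinh(πx/2)) for x > 0, and for a function f on (0,∞) define (Df)(x) := −d/dx (x·f(x)), with Dⁿ its n-fold iterate. Then (D⁴k_C)(2) < 0; in particular D⁴k_C is not nonnegative on (0, ∞). -/
open Real

/-- The operator `D` acting on functions on `(0,∞)`: `(Df)(x) = −d/dx (x·f(x))`. -/
noncomputable def DOp (f : ℝ → ℝ) : ℝ → ℝ := fun x => -deriv (fun y => y * f y) x

/-!
With the Euler operator `θ = x d/dx` one has `x · D(g/x) = -θ g`, hence `x · Dⁿ(g/x) = (-θ)ⁿ g`.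
Since `x k_C(x) = csch(πx/2) / 2` and `θ` commutes with dilations,
`(D⁴k_C)(2) = (θ⁴ csch)(π) / 4`. Four explicit differentiations express `θ⁴ csch` through `x`,
`csch` and `coth`, and its value at `π` is negative because `3 < π < 3.15`, `sinh π > 9` and
`coth π ≥ 1`.
-/

open Filter Topology

noncomputable def eulerOp (g : ℝ → ℝ) : ℝ → ℝ := fun x => x * deriv g x

lemma DOp_congr_of_eventuallyEq {f g : ℝ → ℝ} {x : ℝ} (h : f =ᶠ[𝓝 x] g) :
    DOp f x = DOp g x := by
  have h' : (fun y => y * f y) =ᶠ[𝓝 x] fun y => y * g y :=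
    h.mono fun y hy => congrArg (y * ·) hy
  simp only [DOp, h'.deriv_eq]

lemma DOp_div_id (g : ℝ → ℝ) {x : ℝ} (hx : x ≠ 0) :
    DOp (fun y => g y / y) x = -eulerOp g x / x := by
  have h : (fun y => y * (g y / y)) =ᶠ[𝓝 x] g := by
    filter_upwards [isOpen_ne.mem_nhds hx] with y hy
    field_simp
  simp only [DOp, eulerOp, h.deriv_eq]
  field_simp

lemma eulerOp_const_mul (a : ℝ) (g : ℝ → ℝ) :
    eulerOp (fun x => a * g x) = fun x => a * eulerOp g x := by
  funext x
  simp only [eulerOp, deriv_const_mul_field]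
  ring

lemma iterate_DOp_div_id (g : ℝ → ℝ) (n : ℕ) {x : ℝ} (hx : x ≠ 0) :
    DOp^[n] (fun y => g y / y) x = (-1) ^ n * eulerOp^[n] g x / x := by
  induction n generalizing x with
  | zero => simp
  | succ n ih =>
    have h : DOp^[n] (fun y => g y / y) =ᶠ[𝓝 x]
        fun y => ((-1) ^ n * eulerOp^[n] g y) / y := by
      filter_upwards [isOpen_ne.mem_nhds hx] with y hy
      exact ih hy
    rw [Function.iterate_succ_apply', DOp_congr_of_eventuallyEq h, DOp_div_id _ hx,
      eulerOp_const_mul, Function.iterate_succ_apply']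
    ring

lemma commute_eulerOp_const_mul (a : ℝ) :
    Function.Commute eulerOp fun g x => a * g x :=
  fun g => eulerOp_const_mul a g

lemma commute_eulerOp_comp_mul_left (c : ℝ) :
    Function.Commute eulerOp fun g x => g (c * x) := by
  intro g
  funext x
  simp only [eulerOp, deriv_comp_mul_left, smul_eq_mul]
  ring

lemma eulerOp_eq_of_hasDerivAt {g G : ℝ → ℝ}
    (hg : ∀ x ≠ 0, ∃ g', HasDerivAt g g' x ∧ x * g' = G x) (hG₀ : G 0 = 0) :
    eulerOp g = G := by
  funext x
  rcases eq_or_ne x 0 with rfl | hx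
  · simp [eulerOp, hG₀]
  · obtain ⟨g', hg', hG⟩ := hg x hx
    rw [eulerOp, hg'.deriv, hG]

namespace Real

noncomputable def csch (x : ℝ) : ℝ := (sinh x)⁻¹

noncomputable def coth (x : ℝ) : ℝ := cosh x / sinh x

variable {x : ℝ}

lemma coth_sq (hx : x ≠ 0) : coth x ^ 2 = 1 + csch x ^ 2 := by
  have := sinh_ne_zero.2 hx
  rw [coth, csch]
  field_simp
  linear_combination cosh_sq x

lemma hasDerivAt_csch (hx : x ≠ 0) : HasDerivAt csch (-(csch x * coth x)) x := by
  refine ((hasDerivAt_sinh x).inv (sinh_ne_zero.2 hx)).congr_deriv ?_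
  simp only [csch, coth]
  ring

lemma hasDerivAt_coth (hx : x ≠ 0) : HasDerivAt coth (-csch x ^ 2) x := by
  have := sinh_ne_zero.2 hx
  refine ((hasDerivAt_cosh x).div (hasDerivAt_sinh x) this).congr_deriv ?_
  simp only [csch]
  field_simp
  linear_combination -cosh_sq x

end Real

lemma eulerOp_csch : eulerOp csch = fun x => -(x * csch x * coth x) := by
  exact eulerOp_eq_of_hasDerivAt (fun x hx => ⟨_, hasDerivAt_csch hx, by ring⟩) (by simp)

lemma iterate_two_eulerOp_csch :
    eulerOp^[2] csch = fun x => -(x * csch x * coth x) + x ^ 2 * (csch x + 2 * csch x ^ 3) := by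
  rw [Function.iterate_succ_apply', Function.iterate_one, eulerOp_csch]
  refine eulerOp_eq_of_hasDerivAt (fun x hx => ⟨_,
    (((hasDerivAt_id' x).mul (hasDerivAt_csch hx)).mul (hasDerivAt_coth hx)).neg, ?_⟩) (by simp)
  simp only [Pi.mul_apply]
  linear_combination x ^ 2 * csch x * coth_sq hx

lemma iterate_three_eulerOp_csch :
    eulerOp^[3] csch = fun x => -(x * csch x * coth x) + 3 * x ^ 2 * (csch x + 2 * csch x ^ 3)
      - x ^ 3 * (csch x * coth x + 6 * csch x ^ 3 * coth x) := by
  rw [Function.iterate_succ_apply', iterate_two_eulerOp_csch]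
  refine eulerOp_eq_of_hasDerivAt (fun x hx => ?_) (by simp)
  have hq := hasDerivAt_csch hx
  refine ⟨_, (((hasDerivAt_id' x).mul hq).mul (hasDerivAt_coth hx)).neg.add
    ((hasDerivAt_pow 2 x).mul (hq.add ((hq.pow 3).const_mul 2))), ?_⟩
  simp only [Pi.mul_apply]
  push_cast
  linear_combination x ^ 2 * csch x * coth_sq hx

/- `θ⁴ = x d + 7x²d² + 6x³d³ + x⁴d⁴` (Stirling numbers of the second kind), and the brackets are
the derivatives of `csch`, reduced with `coth² = 1 + csch²`. -/
lemma iterate_four_eulerOp_csch :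
    eulerOp^[4] csch = fun x => -(x * csch x * coth x) + 7 * x ^ 2 * (csch x + 2 * csch x ^ 3)
      - 6 * x ^ 3 * (csch x * coth x + 6 * csch x ^ 3 * coth x)
      + x ^ 4 * (csch x + 20 * csch x ^ 3 + 24 * csch x ^ 5) := by
  rw [Function.iterate_succ_apply', iterate_three_eulerOp_csch]
  refine eulerOp_eq_of_hasDerivAt (fun x hx => ?_) (by simp)
  have hq := hasDerivAt_csch hx
  have hr := hasDerivAt_coth hx
  refine ⟨_, ((((hasDerivAt_id' x).mul hq).mul hr).neg.add
    (((hasDerivAt_pow 2 x).const_mul 3).mul (hq.add ((hq.pow 3).const_mul 2)))).sub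
    ((hasDerivAt_pow 3 x).mul ((hq.mul hr).add (((hq.pow 3).const_mul 6).mul hr))), ?_⟩
  simp only [Pi.add_apply, Pi.mul_apply, Pi.pow_apply]
  push_cast
  linear_combination (x ^ 2 * csch x + x ^ 4 * csch x + 18 * x ^ 4 * csch x ^ 3) * coth_sq hx

lemma nine_lt_sinh_pi : 9 < sinh π := by
  have he : 2.7 < exp 1 := lt_trans (by norm_num) exp_one_gt_d9
  have h3 : exp 1 ^ 3 < exp π := by
    rw [← exp_nat_mul]
    exact exp_lt_exp.2 (by norm_num; linarith [pi_gt_three])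
  have hneg : exp (-π) < 1 := exp_lt_one_iff.2 (neg_neg_of_pos pi_pos)
  rw [sinh_eq]
  nlinarith [pow_lt_pow_left₀ he (by norm_num) three_ne_zero]

lemma eulerOp_four_expansion_neg {x q r : ℝ} (hx₁ : 3 < x) (hx₂ : x < 3.15) (hq₀ : 0 < q)
    (hq₁ : q < 9⁻¹) (hr : 1 ≤ r) :
    -(x * q * r) + 7 * x ^ 2 * (q + 2 * q ^ 3) - 6 * x ^ 3 * (q * r + 6 * q ^ 3 * r)
      + x ^ 4 * (q + 20 * q ^ 3 + 24 * q ^ 5) < 0 := by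
  have hq2 : q ^ 2 < 81⁻¹ := by nlinarith
  have hcoef : 0 < 20 * x ^ 2 - 36 * x + 14 := by nlinarith
  -- After factoring out `q`, the expression decreases in `r` and increases in `q²`.
  have bound_r : -x * r + 7 * x ^ 2 * (1 + 2 * q ^ 2) - 6 * x ^ 3 * r * (1 + 6 * q ^ 2)
        + x ^ 4 * (1 + 20 * q ^ 2 + 24 * q ^ 4)
      ≤ x ^ 4 - 6 * x ^ 3 + 7 * x ^ 2 - x + x ^ 2 * (20 * x ^ 2 - 36 * x + 14) * q ^ 2
        + 24 * x ^ 4 * (q ^ 2) ^ 2 := by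
    have : 0 ≤ x + 6 * x ^ 3 * (1 + 6 * q ^ 2) := by positivity
    nlinarith [mul_nonneg (sub_nonneg.2 hr) this]
  have bound_q : x ^ 2 * (20 * x ^ 2 - 36 * x + 14) * q ^ 2 + 24 * x ^ 4 * (q ^ 2) ^ 2
      ≤ x ^ 2 * (20 * x ^ 2 - 36 * x + 14) * 81⁻¹ + 24 * x ^ 4 * 81⁻¹ ^ 2 := by
    have hQ : (q ^ 2) ^ 2 ≤ 81⁻¹ ^ 2 := pow_le_pow_left₀ (by positivity) hq2.le 2
    nlinarith [mul_le_mul_of_nonneg_left hq2.le (mul_pos (by positivity) hcoef).le,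
      mul_le_mul_of_nonneg_left hQ (by positivity : (0:ℝ) ≤ 24 * x ^ 4)]
  have poly_neg : x ^ 4 - 6 * x ^ 3 + 7 * x ^ 2 - x + x ^ 2 * (20 * x ^ 2 - 36 * x + 14) * 81⁻¹
      + 24 * x ^ 4 * 81⁻¹ ^ 2 < 0 := by
    nlinarith [mul_pos (sub_pos.2 hx₁) (sub_pos.2 hx₂)]
  nlinarith

lemma iterate_four_eulerOp_csch_pi_neg : eulerOp^[4] csch π < 0 := by
  have hs := nine_lt_sinh_pi
  have hs₀ : 0 < sinh π := by linarith
  rw [iterate_four_eulerOp_csch]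
  exact eulerOp_four_expansion_neg pi_gt_three pi_lt_d2 (inv_pos.2 hs₀)
    (inv_strictAnti₀ (by norm_num) hs) ((one_le_div₀ hs₀).2 (sinh_lt_cosh π).le)

/-- for `k_C(x) = 1/(2x·sinh(πx/2))`, one has `(D⁴k_C)(2) < 0`; in
particular `D⁴k_C` is not nonnegative on `(0,∞)`. -/
theorem hyperbolic_cosine_not_in_L3 :
    (DOp^[4] (fun x : ℝ => 1 / (2 * x * Real.sinh (π * x / 2)))) 2 < 0 ∧
    ¬ ∀ x : ℝ, 0 < x →
        0 ≤ (DOp^[4] (fun x : ℝ => 1 / (2 * x * Real.sinh (π * x / 2)))) x := by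
  have hk : (fun x : ℝ => 1 / (2 * x * sinh (π * x / 2))) =
      fun x => 2⁻¹ * csch (π / 2 * x) / x := by
    funext x
    rw [csch, show π * x / 2 = π / 2 * x by ring]
    ring
  have hθ : eulerOp^[4] (fun x => 2⁻¹ * csch (π / 2 * x)) 2 = 2⁻¹ * eulerOp^[4] csch π := by
    rw [(commute_eulerOp_const_mul 2⁻¹).iterate_left 4 (fun x => csch (π / 2 * x)),
      (commute_eulerOp_comp_mul_left (π / 2)).iterate_left 4 csch]
    norm_num
  have hneg : (DOp^[4] (fun x : ℝ => 1 / (2 * x * sinh (π * x / 2)))) 2 < 0 := by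
    rw [hk, iterate_DOp_div_id _ 4 two_ne_zero, hθ]
    linarith [iterate_four_eulerOp_csch_pi_neg]
  exact ⟨hneg, fun h => (h 2 two_pos).not_gt hneg⟩
end

section
/- For every real t, the integral ∫_0^∞ (cos(tx) − 1)/(x·sinh(πx/2)) dx converges and equals −log(cosh(t)). -/
/-!
Since `1 / sinh y = 2 ∑ₙ exp (-(2n+1) y)`, the integrand is `-∑ₙ Fₙ` with
`Fₙ x = 2 exp (-bₙ x) (1 - cos tx) / x ≥ 0` and `bₙ = (2n+1)π/2`. Writing
`(1 - cos tx) / x = ∫₀ᵗ sin (sx) ds` and using `∫₀^∞ exp (-bx) sin (sx) dx = s / (s² + b²)` gives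
`∫ Fₙ = log (1 + (t / bₙ)²)`. These logarithms sum to `log cosh t` by Euler's product
`cosh t = ∏ₙ (1 + (t / bₙ)²)`, which comes from the sine product and `sin 2z = 2 sin z cos z`.
-/

open Real Set Filter Topology MeasureTheory

theorem Finset.prod_range_two_mul {M : Type*} [CommMonoid M] (g : ℕ → M) (N : ℕ) :
    ∏ j ∈ Finset.range (2 * N), g j
      = (∏ k ∈ Finset.range N, g (2 * k)) * ∏ k ∈ Finset.range N, g (2 * k + 1) := by
  induction N with
  | zero => simp
  | succ N ih =>
    rw [Nat.mul_succ, Finset.prod_range_succ, Finset.prod_range_succ, ih,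
      Finset.prod_range_succ, Finset.prod_range_succ, mul_assoc, mul_mul_mul_comm]

theorem MeasureTheory.integrable_and_hasSum_integral_of_summable_integral_norm
    {α E : Type*} [MeasurableSpace α] {μ : Measure α} [NormedAddCommGroup E] [NormedSpace ℝ E]
    {F : ℕ → α → E} {f : α → E} (hF_int : ∀ n, Integrable (F n) μ)
    (hF_sum : Summable fun n => ∫ a, ‖F n a‖ ∂μ) (hf : ∀ᵐ a ∂μ, HasSum (fun n => F n a) (f a)) :
    Integrable f μ ∧ HasSum (fun n => ∫ a, F n a ∂μ) (∫ a, f a ∂μ) := by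
  have hf_eq : (fun a => ∑' n, F n a) =ᵐ[μ] f := hf.mono fun a ha => ha.tsum_eq
  refine ⟨⟨?_, ?_⟩,
    integral_congr_ae hf_eq ▸ hasSum_integral_of_summable_integral_norm hF_int hF_sum⟩
  · exact aestronglyMeasurable_of_tendsto_ae atTop
      (fun N => Finset.aestronglyMeasurable_sum (Finset.range N) fun n _ => (hF_int n).1)
      (hf.mono fun a ha => by simpa only [Finset.sum_apply] using ha.tendsto_sum_nat)
  rw [hasFiniteIntegral_iff_enorm]
  calc ∫⁻ a, ‖f a‖ₑ ∂μ = ∫⁻ a, ‖∑' n, F n a‖ₑ ∂μ :=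
      lintegral_congr_ae (hf.mono fun a ha => congrArg enorm ha.tsum_eq.symm)
    _ ≤ ∫⁻ a, ∑' n, ‖F n a‖ₑ ∂μ := lintegral_mono fun a => enorm_tsum_le_tsum_enorm
    _ = ∑' n, ∫⁻ a, ‖F n a‖ₑ ∂μ := lintegral_tsum fun n => (hF_int n).1.enorm
    _ = ∑' n, ENNReal.ofReal (∫ a, ‖F n a‖ ∂μ) := by
      simp_rw [ofReal_integral_norm_eq_lintegral_enorm (hF_int _)]
    _ = ENNReal.ofReal (∑' n, ∫ a, ‖F n a‖ ∂μ) :=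
      (ENNReal.ofReal_tsum_of_nonneg (fun n => integral_nonneg fun a => norm_nonneg _) hF_sum).symm
    _ < ⊤ := ENNReal.ofReal_lt_top

theorem Complex.tendsto_euler_cos_prod {z : ℂ} (hz : Complex.sin z ≠ 0) :
    Tendsto (fun N : ℕ => ∏ k ∈ Finset.range N, (1 - (z / ((2 * k + 1) * π / 2)) ^ 2))
      atTop (𝓝 (Complex.cos z)) := by
  have hπ : (π : ℂ) ≠ 0 := Complex.ofReal_ne_zero.mpr pi_ne_zero
  set S : ℂ → ℕ → ℂ := fun w N => π * w * ∏ j ∈ Finset.range N, (1 - w ^ 2 / ((j : ℂ) + 1) ^ 2)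
  have hS : ∀ w, Tendsto (S w) atTop (𝓝 (Complex.sin (π * w))) := Complex.tendsto_euler_sin_prod
  -- split the factors of the sine product at `2z/π` by the parity of `j + 1`
  have hsplit : ∀ N, S (2 * z / π) (2 * N)
      = 2 * S (z / π) N * ∏ k ∈ Finset.range N, (1 - (z / ((2 * k + 1) * π / 2)) ^ 2) := by
    intro N
    simp only [S, Finset.prod_range_two_mul]
    have heven : ∀ k : ℕ, (1 : ℂ) - (2 * z / π) ^ 2 / (((2 * k + 1 : ℕ) : ℂ) + 1) ^ 2
        = 1 - (z / π) ^ 2 / ((k : ℂ) + 1) ^ 2 := by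
      intro k
      have : (k : ℂ) + 1 ≠ 0 := Nat.cast_add_one_ne_zero k
      rw [show ((2 * k + 1 : ℕ) : ℂ) + 1 = 2 * ((k : ℂ) + 1) by push_cast; ring]
      field_simp
    have hodd : ∀ k : ℕ, (1 : ℂ) - (2 * z / π) ^ 2 / (((2 * k : ℕ) : ℂ) + 1) ^ 2
        = 1 - (z / ((2 * k + 1) * π / 2)) ^ 2 := by
      intro k
      have : (2 * k + 1 : ℂ) ≠ 0 := by exact_mod_cast (2 * k).succ_ne_zero
      push_cast
      field_simp
    simp only [heven, hodd]
    ring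
  have hlim : Tendsto (fun N => S (2 * z / π) (2 * N) / (2 * S (z / π) N)) atTop
      (𝓝 (Complex.sin (2 * z) / (2 * Complex.sin z))) := by
    have h2 := (hS (2 * z / π)).comp (tendsto_id.const_mul_atTop' two_pos)
    have h1 := hS (z / π)
    rw [mul_div_cancel₀ _ hπ] at h1 h2
    exact h2.div (h1.const_mul 2) (mul_ne_zero two_ne_zero hz)
  rw [Complex.sin_two_mul, mul_assoc, mul_div_mul_left _ _ two_ne_zero,
    mul_div_cancel_left₀ _ hz] at hlim
  refine hlim.congr' ?_
  filter_upwards [(hS (z / π)).eventually_ne (by rwa [mul_div_cancel₀ _ hπ])] with N hN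
  rw [hsplit, mul_div_cancel_left₀ _ (mul_ne_zero two_ne_zero hN)]

theorem Real.tendsto_euler_cosh_prod (t : ℝ) :
    Tendsto (fun N : ℕ => ∏ k ∈ Finset.range N, (1 + (t / ((2 * k + 1) * π / 2)) ^ 2))
      atTop (𝓝 (cosh t)) := by
  rcases eq_or_ne t 0 with rfl | ht
  · simp
  have hsin : Complex.sin (t * Complex.I) ≠ 0 := by
    rw [Complex.sin_mul_I, ← Complex.ofReal_sinh]
    exact mul_ne_zero (Complex.ofReal_ne_zero.mpr (sinh_ne_zero.mpr ht)) Complex.I_ne_zero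
  have h := Complex.tendsto_euler_cos_prod hsin
  rw [Complex.cos_mul_I, ← Complex.ofReal_cosh] at h
  rw [← tendsto_ofReal_iff]
  convert h using 2 with N
  push_cast
  refine Finset.prod_congr rfl fun k _ => ?_
  rw [mul_div_right_comm (t : ℂ) Complex.I, mul_pow, Complex.I_sq]
  ring

theorem Real.hasSum_log_one_add_of_tendsto_prod {a : ℕ → ℝ} {P : ℝ} (ha : ∀ n, 0 ≤ a n)
    (h : Tendsto (fun N => ∏ n ∈ Finset.range N, (1 + a n)) atTop (𝓝 P)) :
    HasSum (fun n => log (1 + a n)) (log P) := by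
  have hprod : ∀ N, 1 ≤ ∏ n ∈ Finset.range N, (1 + a n) :=
    fun N => Finset.one_le_prod fun n _ => le_add_of_nonneg_right (ha n)
  have hP : P ≠ 0 := (one_pos.trans_le (ge_of_tendsto' h hprod)).ne'
  rw [hasSum_iff_tendsto_nat_of_nonneg (fun n => log_nonneg (le_add_of_nonneg_right (ha n)))]
  convert ((continuousAt_log hP).tendsto.comp h) using 2 with N
  exact (log_prod fun n _ => by linarith [ha n]).symm

theorem Real.hasSum_exp_neg_odd_mul {y : ℝ} (hy : 0 < y) :
    HasSum (fun n : ℕ => exp (-((2 * n + 1) * y))) (2 * sinh y)⁻¹ := by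
  have hr : exp (-(2 * y)) < 1 := exp_lt_one_iff.mpr (by linarith)
  have h := (hasSum_geometric_of_lt_one (exp_pos _).le hr).mul_left (exp (-y))
  have hterm : ∀ n : ℕ, exp (-y) * exp (-(2 * y)) ^ n = exp (-((2 * n + 1) * y)) := by
    intro n
    rw [← exp_nat_mul, ← exp_add]
    ring_nf
  have hval : exp (-y) * (1 - exp (-(2 * y)))⁻¹ = (2 * sinh y)⁻¹ := by
    rw [sinh_eq, mul_div_cancel₀ _ two_ne_zero, show -(2 * y) = -y + -y by ring, exp_add, exp_neg,
      ← mul_inv, mul_sub, mul_one, ← mul_assoc, mul_inv_cancel₀ (exp_pos y).ne', one_mul]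
  simpa only [hterm, hval] using h

theorem hasSum_two_mul_exp_neg_mul_div_sinh {x : ℝ} (hx : 0 < x) (c : ℝ) :
    HasSum (fun n : ℕ => 2 * (exp (-((2 * n + 1) * π / 2 * x)) * c)) (c / sinh (π * x / 2)) := by
  have h := (hasSum_exp_neg_odd_mul (by positivity : 0 < π * x / 2)).mul_left (2 * c)
  have hterm : ∀ n : ℕ, 2 * c * exp (-((2 * n + 1) * (π * x / 2)))
      = 2 * (exp (-((2 * n + 1) * π / 2 * x)) * c) := fun n => by ring_nf
  rwa [funext hterm, show 2 * c * (2 * sinh (π * x / 2))⁻¹ = c / sinh (π * x / 2) by field_simp]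
    at h

theorem integral_exp_neg_mul_mul_sin {b : ℝ} (hb : 0 < b) (s : ℝ) :
    ∫ x in Ioi 0, exp (-(b * x)) * sin (s * x) = s / (s ^ 2 + b ^ 2) := by
  set a : ℂ := (-b : ℝ) + s * Complex.I
  have ha : a.re < 0 := by simpa [a] using hb
  have him : ∀ x : ℝ, exp (-(b * x)) * sin (s * x) = (Complex.exp (a * x)).im := by
    intro x
    simp [a, Complex.exp_im, add_mul, mul_right_comm _ Complex.I]
  have hnorm : Complex.normSq a = s ^ 2 + b ^ 2 := by
    rw [Complex.normSq_add_mul_I, neg_sq, add_comm]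
  calc ∫ x in Ioi 0, exp (-(b * x)) * sin (s * x)
      = (∫ x in Ioi (0 : ℝ), Complex.exp (a * x)).im := by
        simp_rw [him]
        exact integral_im (integrableOn_exp_mul_complex_Ioi ha 0)
    _ = s / (s ^ 2 + b ^ 2) := by
        rw [integral_exp_mul_complex_Ioi ha 0, Complex.ofReal_zero, mul_zero, Complex.exp_zero,
          neg_div, Complex.neg_im, one_div, Complex.inv_im, hnorm, neg_div, neg_neg]
        simp [a]

theorem integral_sin_mul_const {x : ℝ} (hx : x ≠ 0) (t : ℝ) :
    ∫ s in (0 : ℝ)..t, sin (s * x) = (1 - cos (t * x)) / x := by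
  rw [intervalIntegral.integral_comp_mul_right sin hx, integral_sin, zero_mul, cos_zero,
    smul_eq_mul, inv_mul_eq_div]

theorem integral_id_div_sq_add_sq {b : ℝ} (hb : b ≠ 0) (t : ℝ) :
    ∫ s in (0 : ℝ)..t, s / (s ^ 2 + b ^ 2) = log (1 + (t / b) ^ 2) / 2 := by
  have hpos : ∀ s : ℝ, 0 < 1 + (s / b) ^ 2 := fun s => by positivity
  have hderiv : ∀ s ∈ uIcc (0 : ℝ) t,
      HasDerivAt (fun s => log (1 + (s / b) ^ 2) / 2) (s / (s ^ 2 + b ^ 2)) s := by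
    intro s _
    refine ((((hasDerivAt_id' s).div_const b).fun_pow 2).const_add 1).log (hpos s).ne'
      |>.div_const 2 |>.congr_deriv ?_
    rw [div_pow]
    field_simp
    ring
  have hcont : Continuous fun s : ℝ => s / (s ^ 2 + b ^ 2) :=
    continuous_id.div (by fun_prop) fun s => by positivity
  rw [intervalIntegral.integral_eq_sub_of_hasDerivAt hderiv (hcont.intervalIntegrable 0 t)]
  simp

theorem integrable_exp_neg_mul_mul_sin_prod {b : ℝ} (hb : 0 < b) (t : ℝ) :
    Integrable (Function.uncurry fun x s => exp (-(b * x)) * sin (s * x))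
      ((volume.restrict (Ioi 0)).prod (volume.restrict (Ioc 0 t))) := by
  have hexp : IntegrableOn (fun x => exp (-(b * x))) (Ioi 0) := by
    simpa only [neg_mul] using exp_neg_integrableOn_Ioi 0 hb
  refine (hexp.mul_prod (integrableOn_const (C := (1 : ℝ)) measure_Ioc_lt_top.ne)).mono'
    (by fun_prop) (ae_of_all _ fun p => ?_)
  rw [Function.uncurry_apply_pair, norm_mul, norm_of_nonneg (exp_pos _).le, mul_one]
  exact mul_le_of_le_one_right (exp_pos _).le (abs_sin_le_one _)

theorem setIntegral_Ioc_exp_neg_mul_mul_sin {b x : ℝ} (hx : x ≠ 0) {t : ℝ} (ht : 0 ≤ t) :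
    ∫ s in Ioc 0 t, exp (-(b * x)) * sin (s * x) = exp (-(b * x)) * ((1 - cos (t * x)) / x) := by
  rw [integral_const_mul, ← intervalIntegral.integral_of_le ht, integral_sin_mul_const hx]

theorem integrableOn_exp_neg_mul_mul_one_sub_cos_div {b : ℝ} (hb : 0 < b) {t : ℝ} (ht : 0 ≤ t) :
    IntegrableOn (fun x => exp (-(b * x)) * ((1 - cos (t * x)) / x)) (Ioi 0) := by
  refine (integrable_exp_neg_mul_mul_sin_prod hb t).integral_prod_left.congr ?_
  filter_upwards [ae_restrict_mem measurableSet_Ioi] with x hx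
  exact setIntegral_Ioc_exp_neg_mul_mul_sin (ne_of_gt hx) ht

theorem integral_exp_neg_mul_mul_one_sub_cos_div {b : ℝ} (hb : 0 < b) {t : ℝ} (ht : 0 ≤ t) :
    ∫ x in Ioi 0, exp (-(b * x)) * ((1 - cos (t * x)) / x) = log (1 + (t / b) ^ 2) / 2 := by
  calc ∫ x in Ioi 0, exp (-(b * x)) * ((1 - cos (t * x)) / x)
      = ∫ x in Ioi 0, ∫ s in Ioc 0 t, exp (-(b * x)) * sin (s * x) :=
        setIntegral_congr_fun measurableSet_Ioi fun x hx =>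
          (setIntegral_Ioc_exp_neg_mul_mul_sin (ne_of_gt hx) ht).symm
    _ = ∫ s in Ioc 0 t, ∫ x in Ioi 0, exp (-(b * x)) * sin (s * x) :=
        integral_integral_swap (integrable_exp_neg_mul_mul_sin_prod hb t)
    _ = ∫ s in (0 : ℝ)..t, s / (s ^ 2 + b ^ 2) := by
        rw [intervalIntegral.integral_of_le ht]
        exact setIntegral_congr_fun measurableSet_Ioc fun s _ => integral_exp_neg_mul_mul_sin hb s
    _ = log (1 + (t / b) ^ 2) / 2 := integral_id_div_sq_add_sq hb.ne' t

/-- for every real `t`, the integral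
`∫_0^∞ (cos(tx) − 1)/(x·sinh(πx/2)) dx` converges and equals `−log(cosh(t))`. -/
theorem hyperbolic_cosine_levy_exponent (t : ℝ) :
    IntegrableOn (fun x : ℝ => (Real.cos (t * x) - 1) / (x * Real.sinh (π * x / 2)))
      (Set.Ioi 0) ∧
    (∫ x in Set.Ioi (0 : ℝ), (Real.cos (t * x) - 1) / (x * Real.sinh (π * x / 2)))
      = -Real.log (Real.cosh t) := by
  wlog ht : 0 ≤ t generalizing t
  · simpa only [neg_mul, cos_neg, cosh_neg] using this (-t) (by linarith)
  set b : ℕ → ℝ := fun n => (2 * n + 1) * π / 2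
  have hb : ∀ n, 0 < b n := fun n => by positivity
  set F : ℕ → ℝ → ℝ := fun n x => 2 * (exp (-(b n * x)) * ((1 - cos (t * x)) / x))
  have hF_int : ∀ n, IntegrableOn (F n) (Ioi 0) :=
    fun n => (integrableOn_exp_neg_mul_mul_one_sub_cos_div (hb n) ht).const_mul 2
  have hF_nonneg : ∀ n, ∀ x ∈ Ioi (0 : ℝ), 0 ≤ F n x := fun n x hx =>
    mul_nonneg two_pos.le <| mul_nonneg (exp_pos _).le <|
      div_nonneg (sub_nonneg.mpr (cos_le_one _)) (le_of_lt hx)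
  have hF_integral : ∀ n, ∫ x in Ioi 0, F n x = log (1 + (t / b n) ^ 2) := fun n => by
    rw [integral_const_mul, integral_exp_neg_mul_mul_one_sub_cos_div (hb n) ht,
      mul_div_cancel₀ _ two_ne_zero]
  have hF_sum : HasSum (fun n => ∫ x in Ioi 0, F n x) (log (cosh t)) := by
    simpa only [hF_integral] using
      hasSum_log_one_add_of_tendsto_prod (fun n => sq_nonneg _) (tendsto_euler_cosh_prod t)
  have hF_norm_sum : Summable fun n => ∫ x in Ioi 0, ‖F n x‖ := hF_sum.summable.congr fun n =>
    setIntegral_congr_fun measurableSet_Ioi fun x hx => (norm_of_nonneg (hF_nonneg n x hx)).symm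
  have hseries : ∀ᵐ x ∂(volume.restrict (Ioi 0)),
      HasSum (fun n => F n x) (-((cos (t * x) - 1) / (x * sinh (π * x / 2)))) := by
    filter_upwards [ae_restrict_mem measurableSet_Ioi] with x hx
    rw [← neg_div, neg_sub, div_mul_eq_div_div]
    exact hasSum_two_mul_exp_neg_mul_div_sinh hx _
  obtain ⟨hint, hsum⟩ :=
    integrable_and_hasSum_integral_of_summable_integral_norm hF_int hF_norm_sum hseries
  refine ⟨integrable_neg_iff.mp hint, ?_⟩
  rw [← neg_eq_iff_eq_neg, ← integral_neg]
  exact hsum.unique hF_sum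
end

section
/- For every real α > 0 and every real t, the integral ∫_0^∞ (cos(tx) − 1)·e^{−απx}/(x·(1 − e^{−πx})) dx converges and equals log |Γ(α + it/π)| − log Γ(α), where Γ is the complex Gamma function and |z| the complex absolute value. -/
/-!
Expanding `1 / (1 - e^{-πx})` as a geometric series writes the kernel as `∑ₙ e^{-(α+n)πx} / x`.
Against a single exponential `e^{-cx} / x`, the integral of `cos(tx) - 1` is
`log c - log |c + it|`: its derivative in `t` is minus the Laplace transform of `sin`, namely
`-t / (c² + t²)`. With `c = (α+n)π` the terms are `log (α+n) - log |α+n+it/π|`, and their sum is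
`log |Γ(α+it/π)| - log Γ(α)` by Gauss's product formula for `Γ`. All terms have the same sign,
so the convergence of that product already gives the absolute convergence that justifies
exchanging sum and integral.
-/

open Real MeasureTheory Filter Topology Set

namespace MeasureTheory

variable {α E ι : Type*} [MeasurableSpace α] {μ : Measure α} [NormedAddCommGroup E]
  [Countable ι]

theorem integrable_of_hasSum_of_summable_integral_norm {F : ι → α → E} {f : α → E}
    (hF_int : ∀ i, Integrable (F i) μ) (hF_sum : Summable fun i ↦ ∫ a, ‖F i a‖ ∂μ)
    (hf : ∀ᵐ a ∂μ, HasSum (F · a) (f a)) : Integrable f μ := by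
  refine ⟨aestronglyMeasurable_of_tendsto_ae atTop
    (fun s ↦ Finset.aestronglyMeasurable_fun_sum s fun i _ ↦ (hF_int i).1) hf, ?_⟩
  calc ∫⁻ a, ‖f a‖ₑ ∂μ ≤ ∫⁻ a, ∑' i, ‖F i a‖ₑ ∂μ :=
        lintegral_mono_ae (hf.mono fun a ha ↦ ha.tsum_eq ▸ enorm_tsum_le_tsum_enorm)
    _ = ∑' i, ENNReal.ofReal (∫ a, ‖F i a‖ ∂μ) := by
        rw [lintegral_tsum fun i ↦ (hF_int i).1.enorm]
        exact tsum_congr fun i ↦ (ofReal_integral_norm_eq_lintegral_enorm (hF_int i)).symm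
    _ < ⊤ := by
        rw [← ENNReal.ofReal_tsum_of_nonneg
          (fun i ↦ integral_nonneg fun a ↦ norm_nonneg _) hF_sum]
        exact ENNReal.ofReal_lt_top

end MeasureTheory

theorem integral_sin_mul_exp_neg_Ioi {c : ℝ} (hc : 0 < c) (u : ℝ) :
    ∫ x in Ioi (0 : ℝ), sin (u * x) * exp (-(c * x)) = u / (c ^ 2 + u ^ 2) := by
  have ha : (-c + u * Complex.I).re < 0 := by simpa using hc
  have hpt : ∀ x : ℝ, sin (u * x) * exp (-(c * x)) =
      (Complex.exp ((-c + u * Complex.I) * x)).im := by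
    intro x
    simp [Complex.exp_im, mul_comm]
  simp_rw [hpt]
  have him := integral_im (𝕜 := ℂ) (integrableOn_exp_mul_complex_Ioi ha 0)
  simp only [RCLike.im_to_complex] at him
  rw [him, integral_exp_mul_complex_Ioi ha 0]
  simp [Complex.normSq_apply, sq, neg_div]

theorem integrableOn_cos_sub_one_mul_exp_neg_div {c : ℝ} (hc : 0 < c) (t : ℝ) :
    IntegrableOn (fun x ↦ (cos (t * x) - 1) * (exp (-(c * x)) / x)) (Ioi 0) := by
  refine Integrable.mono' ((exp_neg_integrableOn_Ioi 0 hc).const_mul |t|)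
    ((ContinuousOn.mul (by fun_prop) (ContinuousOn.div (by fun_prop) continuousOn_id
      fun x hx ↦ (mem_Ioi.1 hx).ne')).aestronglyMeasurable measurableSet_Ioi) ?_
  filter_upwards [ae_restrict_mem measurableSet_Ioi] with x (hx : 0 < x)
  have hcos : |cos (t * x) - 1| ≤ |t| * x := by
    simpa [abs_mul, abs_of_pos hx] using abs_cos_sub_cos_le (t * x) 0
  rw [norm_mul, Real.norm_eq_abs, Real.norm_of_nonneg (by positivity), neg_mul]
  calc |cos (t * x) - 1| * (exp (-(c * x)) / x) ≤ |t| * x * (exp (-(c * x)) / x) := by gcongr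
    _ = |t| * exp (-(c * x)) := by field_simp

theorem hasDerivAt_integral_cos_sub_one_mul_exp_neg_div {c : ℝ} (hc : 0 < c) (u : ℝ) :
    HasDerivAt (fun t ↦ ∫ x in Ioi 0, (cos (t * x) - 1) * (exp (-(c * x)) / x))
      (-(u / (c ^ 2 + u ^ 2))) u := by
  have hexp : IntegrableOn (fun x ↦ exp (-(c * x))) (Ioi 0) := by
    simpa only [neg_mul] using exp_neg_integrableOn_Ioi 0 hc
  have key := hasDerivAt_integral_of_dominated_loc_of_deriv_le (x₀ := u) univ_mem
    (F' := fun u x ↦ -(sin (u * x) * exp (-(c * x)))) (bound := fun x ↦ exp (-(c * x)))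
    (Eventually.of_forall fun t ↦ (integrableOn_cos_sub_one_mul_exp_neg_div hc t).1)
    (integrableOn_cos_sub_one_mul_exp_neg_div hc u) (by fun_prop)
    (Eventually.of_forall fun x t _ ↦ by
      rw [norm_neg, norm_mul, Real.norm_of_nonneg (exp_pos _).le]
      exact mul_le_of_le_one_left (exp_pos _).le (abs_sin_le_one _))
    hexp
    (by
      filter_upwards [ae_restrict_mem measurableSet_Ioi] with x (hx : 0 < x) t _
      refine (((hasDerivAt_mul_const x).cos.sub_const 1).mul_const _).congr_deriv ?_
      field_simp)
  rw [integral_neg, integral_sin_mul_exp_neg_Ioi hc] at key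
  exact key.2

theorem integral_cos_sub_one_mul_exp_neg_div {c : ℝ} (hc : 0 < c) (t : ℝ) :
    ∫ x in Ioi 0, (cos (t * x) - 1) * (exp (-(c * x)) / x) =
      log c - log ‖(c : ℂ) + t * Complex.I‖ := by
  set G := fun t ↦ ∫ x in Ioi 0, (cos (t * x) - 1) * (exp (-(c * x)) / x)
  set H := fun t : ℝ ↦ log c - log (c ^ 2 + t ^ 2) / 2
  have hH : ∀ u, HasDerivAt H (-(u / (c ^ 2 + u ^ 2))) u := fun u ↦ by
    refine ((((hasDerivAt_pow 2 u).const_add (c ^ 2)).log (by positivity)).div_const 2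
      |>.const_sub (log c)).congr_deriv ?_
    field_simp
    ring
  have hGH : ∀ u, HasDerivAt (G - H) 0 u := fun u ↦ by
    simpa using (hasDerivAt_integral_cos_sub_one_mul_exp_neg_div hc u).sub (hH u)
  have hconst := is_const_of_deriv_eq_zero (fun u ↦ (hGH u).differentiableAt)
    (fun u ↦ (hGH u).deriv) t 0
  have hG0 : G 0 = 0 := by simp [G]
  have hH0 : H 0 = 0 := by simp [H, log_pow]
  rw [Complex.norm_add_mul_I, log_sqrt (by positivity)]
  simpa [hG0, hH0, sub_eq_zero] using hconst

theorem log_sub_log_norm_mul_add_mul_I {c s : ℝ} (hc : 0 < c) (hs : 0 < s) (t : ℝ) :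
    log (c * s) - log ‖((c * s : ℝ) : ℂ) + t * Complex.I‖ =
      log c - log ‖(c : ℂ) + (t / s : ℝ) * Complex.I‖ := by
  have hscale : ((c * s : ℝ) : ℂ) + t * Complex.I = s * ((c : ℂ) + (t / s : ℝ) * Complex.I) := by
    have hs' : (s : ℂ) ≠ 0 := Complex.ofReal_ne_zero.2 hs.ne'
    push_cast
    field_simp
  have hnorm : 0 < ‖(c : ℂ) + (t / s : ℝ) * Complex.I‖ := by
    rw [Complex.norm_add_mul_I]
    positivity
  rw [hscale, norm_mul, Complex.norm_real, norm_of_nonneg hs.le, log_mul hc.ne' hs.ne',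
    log_mul hs.ne' hnorm.ne']
  ring

theorem integral_norm_cos_sub_one_mul_exp_neg_div (c t : ℝ) :
    ∫ x in Ioi 0, ‖(cos (t * x) - 1) * (exp (-(c * x)) / x)‖ =
      -∫ x in Ioi 0, (cos (t * x) - 1) * (exp (-(c * x)) / x) := by
  have hnonpos : ∀ x ∈ Ioi (0 : ℝ), (cos (t * x) - 1) * (exp (-(c * x)) / x) ≤ 0 :=
    fun x (hx : 0 < x) ↦ mul_nonpos_of_nonpos_of_nonneg (by linarith [cos_le_one (t * x)])
      (by positivity)
  rw [setIntegral_congr_fun measurableSet_Ioi fun x hx ↦ Real.norm_of_nonpos (hnonpos x hx),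
    integral_neg]

section GammaProduct

variable {z : ℂ}

theorem re_add_natCast_le_norm (n : ℕ) : z.re + n ≤ ‖z + n‖ := by
  simpa using Complex.re_le_norm (z + n)

theorem norm_add_natCast_pos (hz : 0 < z.re) (n : ℕ) : 0 < ‖z + n‖ :=
  (add_pos_of_pos_of_nonneg hz n.cast_nonneg).trans_le (re_add_natCast_le_norm n)

theorem log_re_add_natCast_le_log_norm (hz : 0 < z.re) (n : ℕ) :
    log (z.re + n) ≤ log ‖z + n‖ :=
  log_le_log (by positivity) (re_add_natCast_le_norm n)

theorem log_GammaSeq_re_sub_log_norm_GammaSeq (hz : 0 < z.re) {n : ℕ} (hn : n ≠ 0) :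
    log (Real.GammaSeq z.re n) - log ‖Complex.GammaSeq z n‖ =
      ∑ j ∈ Finset.range (n + 1), (log ‖z + j‖ - log (z.re + j)) := by
  have hn' : (0 : ℝ) < n := by positivity
  have hnum : 0 < (n : ℝ) ^ z.re * n.factorial := by positivity
  have hnorm : ‖Complex.GammaSeq z n‖ =
      (n : ℝ) ^ z.re * n.factorial / ∏ j ∈ Finset.range (n + 1), ‖z + j‖ := by
    rw [Complex.GammaSeq, norm_div, norm_mul, norm_prod, ← Complex.ofReal_natCast,
      Complex.norm_cpow_eq_rpow_re_of_pos hn', Complex.norm_natCast]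
  rw [hnorm, Real.GammaSeq, log_div hnum.ne' (Finset.prod_pos fun j _ ↦ by positivity).ne',
    log_div hnum.ne' (Finset.prod_pos fun j _ ↦ (norm_add_natCast_pos hz j)).ne',
    log_prod fun j _ ↦ by positivity, log_prod fun j _ ↦ (norm_add_natCast_pos hz j).ne',
    Finset.sum_sub_distrib]
  ring

theorem hasSum_log_norm_add_natCast_sub_log_re_add_natCast (hz : 0 < z.re) :
    HasSum (fun n : ℕ ↦ log ‖z + n‖ - log (z.re + n))
      (log (Real.Gamma z.re) - log ‖Complex.Gamma z‖) := by
  rw [hasSum_iff_tendsto_nat_of_nonneg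
      (fun n ↦ sub_nonneg.2 (log_re_add_natCast_le_log_norm hz n)), ← tendsto_add_atTop_iff_nat 1]
  have hlim : Tendsto (fun n ↦ log (Real.GammaSeq z.re n) - log ‖Complex.GammaSeq z n‖) atTop
      (𝓝 (log (Real.Gamma z.re) - log ‖Complex.Gamma z‖)) :=
    ((Real.GammaSeq_tendsto_Gamma z.re).log (Real.Gamma_pos_of_pos hz).ne').sub
      ((Complex.GammaSeq_tendsto_Gamma z).norm.log
        (norm_ne_zero_iff.2 (Complex.Gamma_ne_zero_of_re_pos hz)))
  refine hlim.congr' ?_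
  filter_upwards [eventually_ne_atTop 0] with n hn
  exact log_GammaSeq_re_sub_log_norm_GammaSeq hz hn

end GammaProduct

theorem hasSum_exp_neg_add_natCast_mul_div {a s x : ℝ} (hs : 0 < s) (hx : 0 < x) :
    HasSum (fun n : ℕ ↦ exp (-((a + n) * s * x)) / x)
      (exp (-(a * s * x)) / (x * (1 - exp (-(s * x))))) := by
  have hterm : (fun n : ℕ ↦ exp (-((a + n) * s * x)) / x) =
      fun n ↦ exp (-(a * s * x)) / x * exp (-(s * x)) ^ n := by
    ext n
    rw [← exp_nat_mul, div_mul_eq_mul_div, ← exp_add]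
    ring_nf
  rw [hterm, ← div_div, div_eq_mul_inv _ (1 - _)]
  exact (hasSum_geometric_of_lt_one (exp_pos _).le
    (exp_lt_one_iff.2 (neg_neg_of_pos (mul_pos hs hx)))).mul_left _

/-- for every real `α > 0` and real `t`, the integral
`∫_0^∞ (cos(tx) − 1)·e^{−απx}/(x·(1 − e^{−πx})) dx` converges and equals
`log |Γ(α + it/π)| − log Γ(α)`, where `Γ` is the complex Gamma function. -/
theorem logistic_levy_exponent (α : ℝ) (hα : 0 < α) (t : ℝ) :
    IntegrableOn
      (fun x : ℝ => (Real.cos (t * x) - 1) *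
        (Real.exp (-(α * π * x)) / (x * (1 - Real.exp (-(π * x)))))) (Set.Ioi 0) ∧
    (∫ x in Set.Ioi (0 : ℝ), (Real.cos (t * x) - 1) *
        (Real.exp (-(α * π * x)) / (x * (1 - Real.exp (-(π * x))))))
      = Real.log ‖Complex.Gamma ((α : ℂ) + (t / π : ℝ) * Complex.I)‖
          - Real.log (Real.Gamma α) := by
  set z : ℂ := α + (t / π : ℝ) * Complex.I
  have hz : z.re = α := by simp [z]
  have hz_pos : 0 < z.re := hz ▸ hα
  have hc (n : ℕ) : 0 < (α + n) * π := by positivity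
  have hF_int (n : ℕ) := integrableOn_cos_sub_one_mul_exp_neg_div (hc n) t
  have hF_val (n : ℕ) : ∫ x in Ioi 0, (cos (t * x) - 1) * (exp (-((α + n) * π * x)) / x) =
      -(log ‖z + n‖ - log (z.re + n)) := by
    have hzn : ((α + n : ℝ) : ℂ) + (t / π : ℝ) * Complex.I = z + n := by
      simp only [z]
      push_cast
      ring
    rw [integral_cos_sub_one_mul_exp_neg_div (hc n),
      log_sub_log_norm_mul_add_mul_I (by positivity) pi_pos, hzn, hz]
    ring
  have hsum := hasSum_log_norm_add_natCast_sub_log_re_add_natCast hz_pos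
  have hF_sum : Summable fun n : ℕ ↦
      ∫ x in Ioi 0, ‖(cos (t * x) - 1) * (exp (-((α + n) * π * x)) / x)‖ := by
    simpa only [integral_norm_cos_sub_one_mul_exp_neg_div, hF_val, neg_neg] using hsum.summable
  have hF_hasSum : ∀ᵐ x ∂(volume.restrict (Ioi 0)),
      HasSum (fun n : ℕ ↦ (cos (t * x) - 1) * (exp (-((α + n) * π * x)) / x))
        ((cos (t * x) - 1) * (exp (-(α * π * x)) / (x * (1 - exp (-(π * x)))))) := by
    filter_upwards [ae_restrict_mem measurableSet_Ioi] with x (hx : 0 < x)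
    exact (hasSum_exp_neg_add_natCast_mul_div pi_pos hx).mul_left _
  refine ⟨integrable_of_hasSum_of_summable_integral_norm hF_int hF_sum hF_hasSum, ?_⟩
  have hI := hasSum_integral_of_summable_integral_norm hF_int hF_sum
  rw [integral_congr_ae (hF_hasSum.mono fun x hx ↦ hx.tsum_eq)] at hI
  rw [hI.unique (by simpa only [hF_val] using hsum.neg), hz]
  ring
end
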